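/- arXiv:1909.12441 — 3 statements merged into one kernel-verified Lean document; each statement's English description precedes it below -/
import Mathlib

section
/- Let m, n, d be positive integers, A ∈ ℝ^{m×n}, B ∈ ℝ^{m×d}, and C = [A, B] ∈ ℝ^{m×(n+d)}. Then the optimal value of the total least squares problem equals the optimal value of rank-n approximation: inf over Â ∈ ℝ^{m×n} and X ∈ ℝ^{n×d} of ‖[Â, ÂX] − C‖_F equals inf over C' ∈ ℝ^{m×(n+d)} with rank(C') ≤ n of ‖C' − C‖_F. -/
/-! Every matrix `[Â, ÂX] = Â * [1, X]` has rank at most `n`, so the total least squares values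
form a subset of the rank-`n` approximation values. Conversely, a matrix of rank at most `n`
factors as `Y * [Z₁, Z₂]` with `Y` of width `n`. For all but finitely many `t` the block
`Z₁ + t • 1` is invertible, and then `Y * [Z₁ + t • 1, Z₂] = [Â, ÂX]` with `Â = Y (Z₁ + t • 1)`
and `X = (Z₁ + t • 1)⁻¹ Z₂`; letting `t → 0` puts the rank-`n` locus in the closure of the total
least squares matrices. By continuity of the Frobenius norm the rank-`n` values then lie between
the total least squares values and their closure, so both sets have the same infimum. -/

open Matrix

/-- The Frobenius norm of a real matrix. -/
noncomputable def frobNorm {m n : Type*} [Fintype m] [Fintype n]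
    (M : Matrix m n ℝ) : ℝ :=
  Real.sqrt (∑ i, ∑ j, (M i j) ^ 2)

theorem csInf_eq_of_subset_of_subset_closure {α : Type*} [ConditionallyCompleteLattice α]
    [TopologicalSpace α] [ClosedIciTopology α] {s t : Set α} (hst : s ⊆ t)
    (hts : t ⊆ closure s) (hs : s.Nonempty) (hb : BddBelow s) : sInf s = sInf t :=
  (((isGLB_iff_of_subset_of_subset_closure hst hts).1 (isGLB_csInf hs hb)).csInf_eq
    (hs.mono hst)).symm

theorem frobNorm_nonneg {m n : Type*} [Fintype m] [Fintype n] (M : Matrix m n ℝ) :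
    0 ≤ frobNorm M :=
  Real.sqrt_nonneg _

@[fun_prop]
theorem continuous_frobNorm {m n : Type*} [Fintype m] [Fintype n] :
    Continuous (frobNorm : Matrix m n ℝ → ℝ) := by
  unfold frobNorm; fun_prop

@[fun_prop]
theorem Continuous.matrix_fromCols {X R m n₁ n₂ : Type*} [TopologicalSpace X] [TopologicalSpace R]
    {A₁ : X → Matrix m n₁ R} {A₂ : X → Matrix m n₂ R} (h₁ : Continuous A₁) (h₂ : Continuous A₂) :
    Continuous fun x => fromCols (A₁ x) (A₂ x) :=
  continuous_matrix <| by rintro i (j | j) <;> refine Continuous.matrix_elem ?_ i j <;> assumption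

theorem Matrix.exists_mul_eq_of_rank_le {K ι κ : Type*} [Field K] [Fintype κ] {n : ℕ}
    (M : Matrix ι κ K) (h : M.rank ≤ n) :
    ∃ (Y : Matrix ι (Fin n) K) (Z : Matrix (Fin n) κ K), Y * Z = M := by
  classical
  set V := LinearMap.range M.mulVecLin
  obtain ⟨f, hf⟩ : ∃ f : V →ₗ[K] Fin n → K, Function.Injective f :=
    finrank_le_iff_exists_linearMap.mp (by rwa [Module.finrank_fin_fun])
  obtain ⟨g, hgf⟩ := f.exists_leftInverse_of_injective (LinearMap.ker_eq_bot.mpr hf)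
  refine ⟨(V.subtype ∘ₗ g).toMatrix', (f ∘ₗ M.mulVecLin.rangeRestrict).toMatrix', ?_⟩
  rw [← LinearMap.toMatrix'_comp, LinearMap.comp_assoc, ← LinearMap.comp_assoc _ f g, hgf,
    LinearMap.id_comp, LinearMap.subtype_comp_codRestrict, ← Matrix.toLin'_apply',
    LinearMap.toMatrix'_toLin']

theorem Matrix.dense_setOf_isUnit_det_add_smul_one {𝕜 ι : Type*} [NontriviallyNormedField 𝕜]
    [CompleteSpace 𝕜] [Fintype ι] [DecidableEq ι] (N : Matrix ι ι 𝕜) :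
    Dense {t : 𝕜 | IsUnit (N + t • 1).det} := by
  have hcompl : {t : 𝕜 | IsUnit (N + t • 1).det}ᶜ = {t | (-N).charpoly.IsRoot t} := by
    ext t
    simp [eval_charpoly, smul_one_eq_diagonal, scalar_apply, add_comm]
  rw [← compl_compl {t : 𝕜 | _}, hcompl]
  exact (Polynomial.finite_setOfPred_isRoot (-N).charpoly_monic.ne_zero).countable.dense_compl 𝕜

theorem Matrix.rank_fromCols_mul_le {R ι κ : Type*} [CommRing R] [StrongRankCondition R]
    [Fintype κ] {n : ℕ} (Â : Matrix ι (Fin n) R) (X : Matrix (Fin n) κ R) :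
    (fromCols Â (Â * X)).rank ≤ n := by
  rw [← Matrix.mul_one Â, Matrix.mul_assoc, Matrix.one_mul, ← mul_fromCols]
  exact (rank_mul_le_left _ _).trans <| (rank_le_card_width Â).trans_eq (Fintype.card_fin n)

theorem Matrix.mem_closure_range_fromCols_mul_of_rank_le {𝕜 ι κ : Type*}
    [NontriviallyNormedField 𝕜] [CompleteSpace 𝕜] [Fintype κ] {n : ℕ} {M : Matrix ι (Fin n ⊕ κ) 𝕜}
    (hM : M.rank ≤ n) :
    M ∈ closure (Set.range fun p : Matrix ι (Fin n) 𝕜 × Matrix (Fin n) κ 𝕜 =>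
      fromCols p.1 (p.1 * p.2)) := by
  obtain ⟨Y, Z, rfl⟩ := M.exists_mul_eq_of_rank_le hM
  set Z₁ := Z.toCols₁
  set Z₂ := Z.toCols₂
  let f : 𝕜 → Matrix ι (Fin n ⊕ κ) 𝕜 := fun t => fromCols (Y * (Z₁ + t • 1)) (Y * Z₂)
  have hf0 : f 0 = Y * Z := by simp [f, Z₁, Z₂, ← mul_fromCols]
  have hfD : f '' {t | IsUnit (Z₁ + t • 1).det} ⊆
      Set.range fun p : Matrix ι (Fin n) 𝕜 × Matrix (Fin n) κ 𝕜 => fromCols p.1 (p.1 * p.2) := by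
    rintro _ ⟨t, ht, rfl⟩
    refine ⟨(Y * (Z₁ + t • 1), (Z₁ + t • 1)⁻¹ * Z₂), ?_⟩
    simp [f, Matrix.mul_assoc, mul_nonsing_inv_cancel_left _ _ ht]
  rw [← hf0]
  refine closure_mono hfD (image_closure_subset_closure_image (by fun_prop) ⟨0, ?_, rfl⟩)
  rw [(dense_setOf_isUnit_det_add_smul_one Z₁).closure_eq]
  exact Set.mem_univ 0

theorem total_least_squares_eq_low_rank_approx_general
    (m n d : ℕ)
    (A : Matrix (Fin m) (Fin n) ℝ) (B : Matrix (Fin m) (Fin d) ℝ) :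
    sInf {c : ℝ | ∃ (Ahat : Matrix (Fin m) (Fin n) ℝ) (X : Matrix (Fin n) (Fin d) ℝ),
        c = frobNorm (Matrix.fromCols Ahat (Ahat * X) - Matrix.fromCols A B)} =
    sInf {c : ℝ | ∃ C' : Matrix (Fin m) (Fin n ⊕ Fin d) ℝ, C'.rank ≤ n ∧
        c = frobNorm (C' - Matrix.fromCols A B)} := by
  set g := fun M : Matrix (Fin m) (Fin n ⊕ Fin d) ℝ => frobNorm (M - fromCols A B)
  set tls := Set.range fun p : Matrix (Fin m) (Fin n) ℝ × Matrix (Fin n) (Fin d) ℝ =>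
    fromCols p.1 (p.1 * p.2)
  have htls : {c : ℝ | ∃ (Ahat : Matrix (Fin m) (Fin n) ℝ) (X : Matrix (Fin n) (Fin d) ℝ),
      c = g (fromCols Ahat (Ahat * X))} = g '' tls := by
    ext c; simp [tls, @eq_comm ℝ c]
  have hrank : {c : ℝ | ∃ C' : Matrix (Fin m) (Fin n ⊕ Fin d) ℝ, C'.rank ≤ n ∧ c = g C'} =
      g '' {M | M.rank ≤ n} := by
    ext c; simp [@eq_comm ℝ c]
  rw [htls, hrank]
  refine csInf_eq_of_subset_of_subset_closure ?_ ?_ (Set.range_nonempty _ |>.image g)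
    ⟨0, by rintro _ ⟨_, _, rfl⟩; exact frobNorm_nonneg _⟩
  · exact Set.image_mono <| Set.range_subset_iff.mpr fun p => rank_fromCols_mul_le p.1 p.2
  · calc g '' {M | M.rank ≤ n} ⊆ g '' closure tls :=
          Set.image_mono fun M => mem_closure_range_fromCols_mul_of_rank_le
      _ ⊆ closure (g '' tls) :=
          image_closure_subset_closure_image (by fun_prop)

/-- The optimal value of the total least squares problem equals the optimal
value of rank-`n` approximation of `C = [A, B]`. -/
theorem total_least_squares_eq_low_rank_approx
    (m n d : ℕ) (hm : 0 < m) (hn : 0 < n) (hd : 0 < d)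
    (A : Matrix (Fin m) (Fin n) ℝ) (B : Matrix (Fin m) (Fin d) ℝ) :
    sInf {c : ℝ | ∃ (Ahat : Matrix (Fin m) (Fin n) ℝ) (X : Matrix (Fin n) (Fin d) ℝ),
        c = frobNorm (Matrix.fromCols Ahat (Ahat * X) - Matrix.fromCols A B)} =
    sInf {c : ℝ | ∃ C' : Matrix (Fin m) (Fin n ⊕ Fin d) ℝ, C'.rank ≤ n ∧
        c = frobNorm (C' - Matrix.fromCols A B)} :=
  total_least_squares_eq_low_rank_approx_general m n d A B
end

section
/- Let ε ≥ 0, C ∈ ℝ^{m×(n+d)}, U* ∈ ℝ^{m×n}, V* ∈ ℝ^{n×(n+d)}, and S₁ ∈ ℝ^{s₁×m}. Suppose there exists Z ∈ ℝ^{n×s₁} such that V' = Z·(S₁C) minimizes V ↦ ‖S₁U*V − S₁C‖_F² over all V ∈ ℝ^{n×(n+d)}, and suppose the sketch S₁ satisfies ‖U*V' − C‖_F² ≤ (1+ε)·‖S₁U*V' − S₁C‖_F² and ‖S₁U*V* − S₁C‖_F² ≤ (1+ε)·‖U*V* − C‖_F². Then there exists U ∈ ℝ^{m×s₁} with rank(U)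 ≤ n such that ‖U·S₁C − C‖_F² ≤ (1+ε)²·‖U*V* − C‖_F². -/
open Matrix

/-- Deterministic content of Claim 3.1: if the sketched regression minimizer `V'` has the
form `Z·S₁C` and the sketch `S₁` preserves the two relevant costs up to `1+ε`, then
there is a rank-`n` matrix `U` with `‖U·S₁C − C‖_F² ≤ (1+ε)²·‖U*V* − C‖_F²`. -/
theorem countsketch_low_rank_approx
    (m n d s₁ : ℕ) (ε : ℝ) (hε : 0 ≤ ε)
    (C : Matrix (Fin m) (Fin (n + d)) ℝ)
    (Ustar : Matrix (Fin m) (Fin n) ℝ) (Vstar : Matrix (Fin n) (Fin (n + d)) ℝ)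
    (S₁ : Matrix (Fin s₁) (Fin m) ℝ)
    (V' : Matrix (Fin n) (Fin (n + d)) ℝ)
    (hform : ∃ Z : Matrix (Fin n) (Fin s₁) ℝ, V' = Z * (S₁ * C))
    (hmin : ∀ V : Matrix (Fin n) (Fin (n + d)) ℝ,
      frobNorm (S₁ * Ustar * V' - S₁ * C) ^ 2 ≤ frobNorm (S₁ * Ustar * V - S₁ * C) ^ 2)
    (hsk₁ : frobNorm (Ustar * V' - C) ^ 2 ≤ (1 + ε) * frobNorm (S₁ * Ustar * V' - S₁ * C) ^ 2)
    (hsk₂ : frobNorm (S₁ * Ustar * Vstar - S₁ * C) ^ 2 ≤ (1 + ε) * frobNorm (Ustar * Vstar - C) ^ 2) :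
    ∃ U : Matrix (Fin m) (Fin s₁) ℝ, U.rank ≤ n ∧
      frobNorm (U * (S₁ * C) - C) ^ 2 ≤ (1 + ε) ^ 2 * frobNorm (Ustar * Vstar - C) ^ 2 := by
  obtain ⟨Z, hZ⟩ := hform
  refine ⟨Ustar * Z, ?_, ?_⟩
  · exact (Matrix.rank_mul_le_left Ustar Z).trans ((Matrix.rank_le_card_width Ustar).trans (by simp))
  · have h1 : Ustar * Z * (S₁ * C) = Ustar * V' := by rw [hZ, Matrix.mul_assoc]
    rw [h1]
    have h2 := hmin Vstar
    have h1ε : (0:ℝ) ≤ 1 + ε := by linarith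
    calc frobNorm (Ustar * V' - C) ^ 2
        ≤ (1 + ε) * frobNorm (S₁ * Ustar * V' - S₁ * C) ^ 2 := hsk₁
      _ ≤ (1 + ε) * frobNorm (S₁ * Ustar * Vstar - S₁ * C) ^ 2 := by
          exact mul_le_mul_of_nonneg_left h2 h1ε
      _ ≤ (1 + ε) * ((1 + ε) * frobNorm (Ustar * Vstar - C) ^ 2) := by
          exact mul_le_mul_of_nonneg_left hsk₂ h1ε
      _ = (1 + ε) ^ 2 * frobNorm (Ustar * Vstar - C) ^ 2 := by ring
end

section
/- Let N ∈ ℝ^{m×p}, R ∈ ℝ^{s×p}, and let n be a nonnegative integer. Then there exists U₂ ∈ ℝ^{m×s} with rank(U₂) ≤ n such that ‖U₂R − N‖_F ≤ ‖UR − N‖_F for every U ∈ ℝ^{m×s} with rank(U) ≤ n, and such that colspan(U₂) ⊆ colspan(N). -/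
open Matrix

/-- The column space of a real matrix: the span of its columns in `ℝ^m`. -/
noncomputable def colSpan {m n : Type*} [Fintype m] [Fintype n]
    (M : Matrix m n ℝ) : Submodule ℝ (m → ℝ) :=
  Submodule.span ℝ (Set.range Mᵀ)

/-!
The map `U ↦ U * R` sends the rank-`≤ n` matrices onto the set of `M` with `rank M ≤ n` and
`M * (W * R) = M`, where `W` is a generalized inverse of `R` (`R * W * R = R`). That set is
closed, because rank is lower semicontinuous, so the residual `‖M - N‖_F` attains its minimum
on it. Multiplying a minimizer on the left by the orthogonal projection `P` onto `colspan N`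
keeps the rank bound, puts the column space inside `colspan N`, and does not increase the
residual: `P * M - N = P * (M - N)` and `P` contracts every column.
-/

theorem Matrix.isClosed_setOf_rank_le {𝕜 : Type*} [NontriviallyNormedField 𝕜] [CompleteSpace 𝕜]
    {m n : Type*} [Fintype m] [Fintype n] (k : ℕ) :
    IsClosed {A : Matrix m n 𝕜 | A.rank ≤ k} := by
  classical
  have hcont : Continuous fun A : Matrix m n 𝕜 => LinearMap.toContinuousLinearMap (toLin' A) :=
    LinearMap.continuous_of_finiteDimensional
      ((LinearMap.toContinuousLinearMap : ((n → 𝕜) →ₗ[𝕜] (m → 𝕜)) ≃ₗ[𝕜] _).toLinearMap ∘ₗ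
        (Matrix.toLin' : Matrix m n 𝕜 ≃ₗ[𝕜] _).toLinearMap)
  have hrank (A : Matrix m n 𝕜) : A.rank ≤ k ↔ ¬ ((k + 1 : ℕ) : Cardinal) ≤ (toLin' A).rank := by
    rw [LinearMap.rank, ← Module.finrank_eq_rank, Nat.cast_le, not_le, Nat.lt_succ_iff,
      Matrix.toLin'_apply', Matrix.rank]
  simp_rw [hrank]
  exact ((isOpen_setOfPred_nat_le_rank (k + 1)).preimage hcont).isClosed_compl

theorem Matrix.exists_mul_mul_eq_self {K : Type*} [Field K] {m n : Type*} [Fintype m] [Fintype n]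
    (A : Matrix m n K) : ∃ W : Matrix n m K, A * W * A = A := by
  classical
  obtain ⟨g, hg⟩ := (toLin' A).rangeRestrict.exists_rightInverse_of_surjective
    (LinearMap.range_rangeRestrict _)
  obtain ⟨h, hh⟩ := LinearMap.exists_extend g
  refine ⟨LinearMap.toMatrix' h, toLin'.injective (LinearMap.ext fun x => ?_)⟩
  have hAg := congr(Subtype.val ($hg ⟨toLin' A x, LinearMap.mem_range_self _ x⟩))
  rw [← hh] at hAg
  simpa [Matrix.toLin'_mul] using hAg

theorem IsClosed.exists_forall_frobNorm_sub_le {a b : Type*} [Fintype a] [Fintype b]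
    {S : Set (Matrix a b ℝ)} (hS : IsClosed S) (hne : S.Nonempty) (N : Matrix a b ℝ) :
    ∃ M ∈ S, ∀ M' ∈ S, frobNorm (M - N) ≤ frobNorm (M' - N) := by
  let := Matrix.frobeniusNormedAddCommGroup (m := a) (n := b) (α := ℝ)
  let := Matrix.frobeniusNormedSpace (m := a) (n := b) (α := ℝ) (R := ℝ)
  have hnorm (M : Matrix a b ℝ) : frobNorm M = ‖M‖ := by
    rw [frobenius_norm_def, frobNorm, Real.sqrt_eq_rpow]
    simp
  obtain ⟨M, hM, hdist⟩ := hS.exists_infDist_eq_dist hne N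
  refine ⟨M, hM, fun M' hM' => ?_⟩
  rw [hnorm, hnorm, ← dist_eq_norm, ← dist_eq_norm, dist_comm, ← hdist, dist_comm]
  exact Metric.infDist_le_dist_of_mem hM'

theorem colSpan_eq_range_mulVecLin {a b : Type*} [Fintype a] [Fintype b] (M : Matrix a b ℝ) :
    colSpan M = LinearMap.range M.mulVecLin := by
  rw [Matrix.range_mulVecLin]; rfl

theorem colSpan_mul_le_left {a b c : Type*} [Fintype a] [Fintype b] [Fintype c]
    (A : Matrix a b ℝ) (B : Matrix b c ℝ) : colSpan (A * B) ≤ colSpan A := by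
  rw [colSpan_eq_range_mulVecLin, colSpan_eq_range_mulVecLin, Matrix.mulVecLin_mul]
  exact LinearMap.range_comp_le_range _ _

theorem frobNorm_le_of_forall_col_sum_sq_le {a b : Type*} [Fintype a] [Fintype b]
    {X Y : Matrix a b ℝ} (h : ∀ j, ∑ i, Y i j ^ 2 ≤ ∑ i, X i j ^ 2) : frobNorm Y ≤ frobNorm X := by
  refine Real.sqrt_le_sqrt ?_
  rw [Finset.sum_comm, Finset.sum_comm (γ := a)]
  exact Finset.sum_le_sum fun j _ => h j

namespace Submodule

variable {a : Type*} [Fintype a]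

def toEuclidean (V : Submodule ℝ (a → ℝ)) : Submodule ℝ (EuclideanSpace ℝ a) :=
  V.comap (WithLp.linearEquiv 2 ℝ (a → ℝ)).toLinearMap

variable [DecidableEq a]

noncomputable def orthogonalProjectionMatrix (V : Submodule ℝ (a → ℝ)) : Matrix a a ℝ :=
  (toLpLin 2 2).symm V.toEuclidean.starProjection.toLinearMap

variable (V : Submodule ℝ (a → ℝ))

theorem orthogonalProjectionMatrix_mulVec (x : a → ℝ) :
    V.orthogonalProjectionMatrix *ᵥ x =
      WithLp.ofLp (V.toEuclidean.starProjection (WithLp.toLp 2 x)) := by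
  change WithLp.ofLp (toLpLin 2 2 V.orthogonalProjectionMatrix (WithLp.toLp 2 x)) = _
  rw [orthogonalProjectionMatrix, LinearEquiv.apply_symm_apply]
  rfl

theorem orthogonalProjectionMatrix_mulVec_mem (x : a → ℝ) :
    V.orthogonalProjectionMatrix *ᵥ x ∈ V := by
  rw [orthogonalProjectionMatrix_mulVec]
  exact V.toEuclidean.starProjection_apply_mem _

theorem orthogonalProjectionMatrix_mulVec_of_mem {x : a → ℝ} (hx : x ∈ V) :
    V.orthogonalProjectionMatrix *ᵥ x = x := by
  rw [orthogonalProjectionMatrix_mulVec, starProjection_eq_self_iff.mpr hx]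

theorem sum_sq_orthogonalProjectionMatrix_mulVec_le (x : a → ℝ) :
    ∑ i, (V.orthogonalProjectionMatrix *ᵥ x) i ^ 2 ≤ ∑ i, x i ^ 2 := by
  have h := pow_le_pow_left₀ (norm_nonneg _)
    (V.toEuclidean.norm_starProjection_apply_le (WithLp.toLp 2 x)) 2
  simpa [EuclideanSpace.real_norm_sq_eq, orthogonalProjectionMatrix_mulVec] using h

theorem colSpan_orthogonalProjectionMatrix_le : colSpan V.orthogonalProjectionMatrix ≤ V := by
  rw [colSpan_eq_range_mulVecLin]
  rintro _ ⟨x, rfl⟩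
  exact V.orthogonalProjectionMatrix_mulVec_mem x

theorem orthogonalProjectionMatrix_mul_of_colSpan_le {b : Type*} [Fintype b] {X : Matrix a b ℝ}
    (hX : colSpan X ≤ V) : V.orthogonalProjectionMatrix * X = X := by
  refine Matrix.ext_iff_mulVec.mpr fun v => ?_
  rw [← Matrix.mulVec_mulVec]
  refine V.orthogonalProjectionMatrix_mulVec_of_mem (hX ?_)
  rw [colSpan_eq_range_mulVecLin]
  exact ⟨v, rfl⟩

theorem frobNorm_orthogonalProjectionMatrix_mul_le {b : Type*} [Fintype b] (X : Matrix a b ℝ) :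
    frobNorm (V.orthogonalProjectionMatrix * X) ≤ frobNorm X := by
  refine frobNorm_le_of_forall_col_sum_sq_le fun j => ?_
  have := V.sum_sq_orthogonalProjectionMatrix_mulVec_le (fun i => X i j)
  simpa [Matrix.mul_apply, Matrix.mulVec, dotProduct] using this

end Submodule

theorem exists_rank_le_forall_frobNorm_mul_sub_le {a b c : Type*} [Fintype a] [Fintype b]
    [Fintype c] (k : ℕ) (N : Matrix a c ℝ) (R : Matrix b c ℝ) :
    ∃ U₁ : Matrix a b ℝ, U₁.rank ≤ k ∧
      ∀ U : Matrix a b ℝ, U.rank ≤ k → frobNorm (U₁ * R - N) ≤ frobNorm (U * R - N) := by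
  obtain ⟨W, hW⟩ := R.exists_mul_mul_eq_self
  -- `S = {U * R | rank U ≤ k}`: for `M ∈ S` take `U = M * W`.
  set S := {M : Matrix a c ℝ | M.rank ≤ k} ∩ {M | M * (W * R) = M}
  have hS : IsClosed S := (isClosed_setOf_rank_le k).inter
    (isClosed_eq (continuous_id.matrix_mul continuous_const) continuous_id)
  have hmem : ∀ U : Matrix a b ℝ, U.rank ≤ k → U * R ∈ S := fun U hU =>
    ⟨(rank_mul_le_left _ _).trans hU, by
      rw [Set.mem_ofPred_eq, Matrix.mul_assoc, ← Matrix.mul_assoc R, hW]⟩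
  obtain ⟨M, ⟨hMk, hMWR⟩, hmin⟩ := hS.exists_forall_frobNorm_sub_le ⟨_, hmem 0 (by simp)⟩ N
  refine ⟨M * W, (rank_mul_le_left _ _).trans hMk, fun U hU => ?_⟩
  rw [Matrix.mul_assoc, hMWR]
  exact hmin _ (hmem U hU)

/-- Claim 3.3: the rank-`n`-constrained minimizer of `U ↦ ‖UR − N‖_F` can be taken to
lie in the column span of `N`. -/
theorem rank_constrained_minimizer_in_colspan
    (m p s : ℕ) (n : ℕ)
    (N : Matrix (Fin m) (Fin p) ℝ) (R : Matrix (Fin s) (Fin p) ℝ) :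
    ∃ U₂ : Matrix (Fin m) (Fin s) ℝ, U₂.rank ≤ n ∧
      (∀ U : Matrix (Fin m) (Fin s) ℝ, U.rank ≤ n →
        frobNorm (U₂ * R - N) ≤ frobNorm (U * R - N)) ∧
      colSpan U₂ ≤ colSpan N := by
  obtain ⟨U₁, hU₁, hmin⟩ := exists_rank_le_forall_frobNorm_mul_sub_le n N R
  set P := (colSpan N).orthogonalProjectionMatrix
  have hPN : P * N = N := (colSpan N).orthogonalProjectionMatrix_mul_of_colSpan_le le_rfl
  refine ⟨P * U₁, (rank_mul_le_right _ _).trans hU₁, fun U hU => ?_,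
    (colSpan_mul_le_left _ _).trans (colSpan N).colSpan_orthogonalProjectionMatrix_le⟩
  calc frobNorm (P * U₁ * R - N) = frobNorm (P * (U₁ * R - N)) := by
        rw [Matrix.mul_sub, hPN, Matrix.mul_assoc]
    _ ≤ frobNorm (U₁ * R - N) := (colSpan N).frobNorm_orthogonalProjectionMatrix_mul_le _
    _ ≤ frobNorm (U * R - N) := hmin U hU
end
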